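/- The sequent H₁, ..., Hₙ ⊢ A has a classical proof if and only if the sequent ⊢ ‖H₁‖ ⇒ᶜ ... ⇒ᶜ ‖Hₙ‖ ⇒ᶜ ‖A‖ has a constructive proof, where B ⇒ᶜ C abbreviates ¬¬((¬¬B) ⇒ (¬¬C)). -/

import Mathlib

/-- Terms: de Bruijn variables and a binary function symbol (union). -/
inductive Tm : Type where
  | var : Nat → Tm
  | cup : Tm → Tm → Tm
deriving DecidableEq

def Tm.rename (f : Nat → Nat) : Tm → Tm
  | .var n => .var (f n)
  | .cup s t => .cup (s.rename f) (t.rename f)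

def Tm.subst (σ : Nat → Tm) : Tm → Tm
  | .var n => σ n
  | .cup s t => .cup (s.subst σ) (t.subst σ)

/-- First-order formulas over Nat-indexed predicate symbols, de Bruijn binders. -/
inductive Fm : Type where
  | atom : Nat → List Tm → Fm
  | top : Fm
  | bot : Fm
  | neg : Fm → Fm
  | and : Fm → Fm → Fm
  | or : Fm → Fm → Fm
  | imp : Fm → Fm → Fm
  | all : Fm → Fm
  | ex : Fm → Fm
deriving DecidableEq

def liftR (f : Nat → Nat) : Nat → Nat
  | 0 => 0
  | n + 1 => f n + 1

def liftS (σ : Nat → Tm) : Nat → Tm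
  | 0 => .var 0
  | n + 1 => (σ n).rename Nat.succ

def Fm.rename (f : Nat → Nat) : Fm → Fm
  | .atom p l => .atom p (l.map (Tm.rename f))
  | .top => .top
  | .bot => .bot
  | .neg A => .neg (A.rename f)
  | .and A B => .and (A.rename f) (B.rename f)
  | .or A B => .or (A.rename f) (B.rename f)
  | .imp A B => .imp (A.rename f) (B.rename f)
  | .all A => .all (A.rename (liftR f))
  | .ex A => .ex (A.rename (liftR f))

def Fm.subst (σ : Nat → Tm) : Fm → Fm
  | .atom p l => .atom p (l.map (Tm.subst σ))
  | .top => .top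
  | .bot => .bot
  | .neg A => .neg (A.subst σ)
  | .and A B => .and (A.subst σ) (B.subst σ)
  | .or A B => .or (A.subst σ) (B.subst σ)
  | .imp A B => .imp (A.subst σ) (B.subst σ)
  | .all A => .all (A.subst (liftS σ))
  | .ex A => .ex (A.subst (liftS σ))

/-- Shift all free variables up by one. -/
def Fm.shift (A : Fm) : Fm := A.rename Nat.succ

/-- Instantiate the outermost bound variable with term `t` : `(t/x)A`. -/
def Fm.inst (t : Tm) (A : Fm) : Fm :=
  A.subst (fun n => match n with | 0 => t | n + 1 => .var n)

/-- Double negation. -/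
def Fm.dn (A : Fm) : Fm := .neg (.neg A)

/-- Cut-free classical multi-conclusion sequent calculus (Figure 1). -/
inductive Cl : List Fm → List Fm → Prop where
  | ax (A : Fm) : Cl [A] [A]
  | perm {Γ Γ' Δ Δ'} : Γ.Perm Γ' → Δ.Perm Δ' → Cl Γ Δ → Cl Γ' Δ'
  | contrL {Γ Δ A} : Cl (A :: A :: Γ) Δ → Cl (A :: Γ) Δ
  | contrR {Γ Δ A} : Cl Γ (A :: A :: Δ) → Cl Γ (A :: Δ)
  | weakL {Γ Δ A} : Cl Γ Δ → Cl (A :: Γ) Δ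
  | weakR {Γ Δ A} : Cl Γ Δ → Cl Γ (A :: Δ)
  | topR {Γ Δ} : Cl Γ (.top :: Δ)
  | botL {Γ Δ} : Cl (.bot :: Γ) Δ
  | negL {Γ Δ A} : Cl Γ (A :: Δ) → Cl (.neg A :: Γ) Δ
  | negR {Γ Δ A} : Cl (A :: Γ) Δ → Cl Γ (.neg A :: Δ)
  | andL {Γ Δ A B} : Cl (A :: B :: Γ) Δ → Cl (.and A B :: Γ) Δ
  | andR {Γ Δ A B} : Cl Γ (A :: Δ) → Cl Γ (B :: Δ) → Cl Γ (.and A B :: Δ)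
  | orL {Γ Δ A B} : Cl (A :: Γ) Δ → Cl (B :: Γ) Δ → Cl (.or A B :: Γ) Δ
  | orR1 {Γ Δ A B} : Cl Γ (A :: Δ) → Cl Γ (.or A B :: Δ)
  | orR2 {Γ Δ A B} : Cl Γ (B :: Δ) → Cl Γ (.or A B :: Δ)
  | impL {Γ Δ A B} : Cl Γ (A :: Δ) → Cl (B :: Γ) Δ → Cl (.imp A B :: Γ) Δ
  | impR {Γ Δ A B} : Cl (A :: Γ) (B :: Δ) → Cl Γ (.imp A B :: Δ)
  | allL {Γ Δ A} (t : Tm) : Cl (A.inst t :: Γ) Δ → Cl (.all A :: Γ) Δ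
  | allR {Γ Δ A} : Cl (Γ.map Fm.shift) (A :: Δ.map Fm.shift) → Cl Γ (.all A :: Δ)
  | exL {Γ Δ A} : Cl (A :: Γ.map Fm.shift) (Δ.map Fm.shift) → Cl (.ex A :: Γ) Δ
  | exR {Γ Δ A} (t : Tm) : Cl Γ (A.inst t :: Δ) → Cl Γ (.ex A :: Δ)

/-- Constructive (intuitionistic) single-conclusion sequent calculus:
the restriction of the classical calculus to sequents with at most one
conclusion, with the adapted ⇒-left rule. -/
inductive Intu : List Fm → Option Fm → Prop where
  | ax (A : Fm) : Intu [A] (some A)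
  | perm {Γ Γ' Δ} : Γ.Perm Γ' → Intu Γ Δ → Intu Γ' Δ
  | contrL {Γ Δ A} : Intu (A :: A :: Γ) Δ → Intu (A :: Γ) Δ
  | weakL {Γ Δ A} : Intu Γ Δ → Intu (A :: Γ) Δ
  | weakR {Γ A} : Intu Γ none → Intu Γ (some A)
  | topR {Γ} : Intu Γ (some .top)
  | botL {Γ Δ} : Intu (.bot :: Γ) Δ
  | negL {Γ A} : Intu Γ (some A) → Intu (.neg A :: Γ) none
  | negR {Γ A} : Intu (A :: Γ) none → Intu Γ (some (.neg A))
  | andL {Γ Δ A B} : Intu (A :: B :: Γ) Δ → Intu (.and A B :: Γ) Δ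
  | andR {Γ A B} : Intu Γ (some A) → Intu Γ (some B) → Intu Γ (some (.and A B))
  | orL {Γ Δ A B} : Intu (A :: Γ) Δ → Intu (B :: Γ) Δ → Intu (.or A B :: Γ) Δ
  | orR1 {Γ A B} : Intu Γ (some A) → Intu Γ (some (.or A B))
  | orR2 {Γ A B} : Intu Γ (some B) → Intu Γ (some (.or A B))
  | impL {Γ Δ A B} : Intu Γ (some A) → Intu (B :: Γ) Δ → Intu (.imp A B :: Γ) Δ
  | impR {Γ A B} : Intu (A :: Γ) (some B) → Intu Γ (some (.imp A B))
  | allL {Γ Δ A} (t : Tm) : Intu (A.inst t :: Γ) Δ → Intu (.all A :: Γ) Δ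
  | allR {Γ A} : Intu (Γ.map Fm.shift) (some A) → Intu Γ (some (.all A))
  | exL {Γ Δ A} : Intu (A :: Γ.map Fm.shift) (Δ.map Fm.shift) → Intu (.ex A :: Γ) Δ
  | exR {Γ A} (t : Tm) : Intu Γ (some (A.inst t)) → Intu Γ (some (.ex A))

/-- Dowek's translation ‖·‖: double negations both before and after each
connective and quantifier, atoms unchanged. -/
def Fm.bar : Fm → Fm
  | .atom p l => .atom p l
  | .top => Fm.dn .top
  | .bot => Fm.dn .bot
  | .neg A => Fm.dn (Fm.dn (.neg A.bar))
  | .and A B => Fm.dn (.and (Fm.dn A.bar) (Fm.dn B.bar))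
  | .or A B => Fm.dn (.or (Fm.dn A.bar) (Fm.dn B.bar))
  | .imp A B => Fm.dn (.imp (Fm.dn A.bar) (Fm.dn B.bar))
  | .all A => Fm.dn (.all (Fm.dn A.bar))
  | .ex A => Fm.dn (.ex (Fm.dn A.bar))

/-- The light translation |·|: like ‖·‖ but the outermost double negation
is removed. -/
def Fm.light : Fm → Fm
  | .atom p l => .atom p l
  | .top => .top
  | .bot => .bot
  | .neg A => .neg (Fm.dn A.bar)
  | .and A B => .and (Fm.dn A.bar) (Fm.dn B.bar)
  | .or A B => .or (Fm.dn A.bar) (Fm.dn B.bar)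
  | .imp A B => .imp (Fm.dn A.bar) (Fm.dn B.bar)
  | .all A => .all (Fm.dn A.bar)
  | .ex A => .ex (Fm.dn A.bar)

/-- A formula is atomic if it is of the form `atom p l`. -/
def Fm.isAtom : Fm → Prop
  | .atom _ _ => True
  | _ => False


/-- Classical implication `B ⇒ᶜ C = ¬¬((¬¬B) ⇒ (¬¬C))`. -/
def Fm.impc (B C : Fm) : Fm := Fm.dn (.imp (Fm.dn B) (Fm.dn C))

/-!
Classical to constructive: by induction on a cut-free classical proof of `Γ ⊢ Δ` one obtains a
constructive proof of `‖Γ‖, ¬|Δ| ⊢`, where `|A|` is `‖A‖` without its outermost `¬¬`; with an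
empty conclusion, `X` and `¬¬X` are interchangeable as hypotheses, and this is all the simulation
of the classical rules needs. Since `⇒ᶜ`, and `‖·‖` on non-atomic formulas, begin with `¬¬`, the
hypotheses are then folded into `‖Γ‖ ⇒ᶜ … ⇒ᶜ ‖A‖` by introduction rules alone (for an atomic `A`
and empty `Γ` there is nothing to do: `⊢ A` has no classical proof).

Constructive to classical: a constructive proof is a classical one, but the calculus has no cut,
so the double negations inserted by the translation cannot be cut away. Instead each formula of
the constructive proof is tracked together with an undecorated formula, and where a rule acts on
a `¬¬` that the undecorated formula lacks, the invertibility of the negation rules absorbs it.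
Invertibility of `⇒`-right finally unfolds the iterated implication.
-/

/-! ### Substitution -/

theorem Tm.subst_comp_rename (σ : Nat → Tm) (f : Nat → Nat) :
    Tm.subst σ ∘ Tm.rename f = Tm.subst (σ ∘ f) := by
  funext t
  induction t with
  | var n => rfl
  | cup s t ihs iht => simp_all [Tm.rename, Tm.subst]

theorem Tm.subst_var : Tm.subst .var = id := by
  funext t
  induction t with
  | var n => rfl
  | cup s t ihs iht => simp_all [Tm.subst]

theorem liftS_comp_liftR (σ : Nat → Tm) (f : Nat → Nat) :
    liftS σ ∘ liftR f = liftS (σ ∘ f) := by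
  funext n; cases n <;> rfl

theorem liftS_var : liftS .var = .var := by
  funext n; cases n <;> rfl

theorem Fm.subst_rename (σ : Nat → Tm) (f : Nat → Nat) (A : Fm) :
    (A.rename f).subst σ = A.subst (σ ∘ f) := by
  induction A generalizing σ f <;>
    simp_all [Fm.rename, Fm.subst, Tm.subst_comp_rename, liftS_comp_liftR]

theorem Fm.subst_var (A : Fm) : A.subst .var = A := by
  induction A <;> simp_all [Fm.subst, Tm.subst_var, liftS_var]

theorem Fm.shift_injective : Function.Injective Fm.shift :=
  Function.LeftInverse.injective (g := Fm.subst fun n => .var (n - 1)) fun A => by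
    simp [Fm.shift, Fm.subst_rename, Function.comp_def, Fm.subst_var]

theorem Fm.inst_var_zero_rename_liftR_succ (A : Fm) :
    (A.rename (liftR Nat.succ)).inst (.var 0) = A := by
  rw [Fm.inst, Fm.subst_rename]
  convert Fm.subst_var A
  funext n; cases n <;> rfl

theorem Fm.ne_imp_right (A B : Fm) : B ≠ .imp A B :=
  fun h => by simpa using congrArg sizeOf h

namespace List

variable {α β : Type*}

theorem cons_append_cons_perm_append_cons_cons {a b : α} {l l' : List α} :
    a :: (l ++ b :: l') ~ l ++ b :: a :: l' :=
  perm_middle.symm.trans ((Perm.swap _ _ _).append_left _)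

variable [DecidableEq α] [DecidableEq β]

/-- Removing every occurrence, not just one, is what lets the inversion lemmas commute with
contraction. -/
def eraseAll (a : α) (l : List α) : List α := l.filter (· ≠ a)

@[simp] theorem eraseAll_nil (a : α) : eraseAll a [] = [] := rfl

theorem eraseAll_cons_of_eq {a b : α} (h : b = a) (l : List α) :
    eraseAll a (b :: l) = eraseAll a l := by
  simp [eraseAll, h]

theorem eraseAll_cons_of_ne {a b : α} (h : b ≠ a) (l : List α) :
    eraseAll a (b :: l) = b :: eraseAll a l := by
  simp [eraseAll, h]

theorem eraseAll_sublist (a : α) (l : List α) : eraseAll a l <+ l := filter_sublist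

theorem eraseAll_cons_sublist (a b : α) (l : List α) :
    eraseAll a (b :: l) <+ b :: eraseAll a l := by
  by_cases h : b = a
  · rw [eraseAll_cons_of_eq h]; exact .cons b (.refl _)
  · rw [eraseAll_cons_of_ne h]

theorem Perm.eraseAll {l l' : List α} (a : α) (h : l ~ l') : l.eraseAll a ~ l'.eraseAll a :=
  h.filter _

theorem eraseAll_map {f : α → β} (hf : Function.Injective f) (a : α) (l : List α) :
    eraseAll (f a) (l.map f) = (eraseAll a l).map f := by
  simp [List.eraseAll, List.filter_map, Function.comp_def, hf.eq_iff]

end List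

theorem Fm.eraseAll_map_shift_neg (A : Fm) (Δ : List Fm) :
    (Δ.map Fm.shift).eraseAll (.neg A.shift) = (Δ.eraseAll (.neg A)).map Fm.shift :=
  List.eraseAll_map Fm.shift_injective (.neg A) Δ

theorem Fm.eraseAll_map_shift_imp (A B : Fm) (Δ : List Fm) :
    (Δ.map Fm.shift).eraseAll (.imp A.shift B.shift) = (Δ.eraseAll (.imp A B)).map Fm.shift :=
  List.eraseAll_map Fm.shift_injective (.imp A B) Δ

/-! ### Structural rules and invertibility of the classical calculus -/

namespace Cl

variable {Γ Γ' Δ Δ' : List Fm} {A B C : Fm}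

theorem permL (h : Γ.Perm Γ') (d : Cl Γ Δ) : Cl Γ' Δ := .perm h (.refl _) d

theorem permR (h : Δ.Perm Δ') (d : Cl Γ Δ) : Cl Γ Δ' := .perm (.refl _) h d

theorem swapL (d : Cl (A :: B :: Γ) Δ) : Cl (B :: A :: Γ) Δ := d.permL (.swap B A Γ)

theorem swapR (d : Cl Γ (A :: B :: Δ)) : Cl Γ (B :: A :: Δ) := d.permR (.swap B A Δ)

theorem rotL (d : Cl (A :: B :: C :: Γ) Δ) : Cl (B :: C :: A :: Γ) Δ :=
  d.swapL.permL ((List.Perm.swap C A Γ).cons B)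

theorem rotR (d : Cl Γ (A :: B :: C :: Δ)) : Cl Γ (B :: C :: A :: Δ) :=
  d.swapR.permR ((List.Perm.swap C A Δ).cons B)

theorem weakenL_append (l : List Fm) (d : Cl Γ Δ) : Cl (l ++ Γ) Δ := by
  induction l with
  | nil => exact d
  | cons _ _ ih => exact .weakL ih

theorem weakenR_append (l : List Fm) (d : Cl Γ Δ) : Cl Γ (l ++ Δ) := by
  induction l with
  | nil => exact d
  | cons _ _ ih => exact .weakR ih

theorem weakenL_sublist (h : Γ.Sublist Γ') (d : Cl Γ Δ) : Cl Γ' Δ :=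
  let ⟨l, hl⟩ := h.exists_perm_append
  (d.weakenL_append l).permL (List.perm_append_comm.trans hl.symm)

theorem weakenR_sublist (h : Δ.Sublist Δ') (d : Cl Γ Δ) : Cl Γ Δ' :=
  let ⟨l, hl⟩ := h.exists_perm_append
  (d.weakenR_append l).permR (List.perm_append_comm.trans hl.symm)

theorem ax_of_mem (hΓ : A ∈ Γ) (hΔ : A ∈ Δ) : Cl Γ Δ :=
  ((Cl.ax A).weakenL_sublist (List.singleton_sublist.2 hΓ)).weakenR_sublist
    (List.singleton_sublist.2 hΔ)

theorem dnL (d : Cl (A :: Γ) Δ) : Cl (A.dn :: Γ) Δ := .negL (.negR d)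

theorem dnR (d : Cl Γ (A :: Δ)) : Cl Γ (A.dn :: Δ) := .negR (.negL d)

theorem negL_negR (d : Cl [B] [A]) : Cl [.neg A] [.neg B] := .negR (Cl.negL d).swapL

theorem all_mono (d : Cl [A] [B]) : Cl [.all A] [.all B] := by
  refine .allR (.allL (.var 0) ?_)
  rwa [Fm.inst_var_zero_rename_liftR_succ]

theorem ex_mono (d : Cl [A] [B]) : Cl [.ex A] [.ex B] := by
  refine .exL (.exR (.var 0) ?_)
  rwa [Fm.inst_var_zero_rename_liftR_succ]

end Cl

namespace Cl

variable {Γ Δ : List Fm} {B C X : Fm}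

theorem of_eraseAll_consL (d : Cl ((B :: Γ).eraseAll X) Δ) : Cl (B :: Γ.eraseAll X) Δ :=
  d.weakenL_sublist (List.eraseAll_cons_sublist _ _ _)

theorem of_eraseAll_consR (d : Cl Γ ((B :: Δ).eraseAll X)) : Cl Γ (B :: Δ.eraseAll X) :=
  d.weakenR_sublist (List.eraseAll_cons_sublist _ _ _)

theorem of_eraseAll_consR₂ (d : Cl Γ (C :: (B :: Δ).eraseAll X)) : Cl Γ (C :: B :: Δ.eraseAll X) :=
  d.weakenR_sublist (.cons_cons C (List.eraseAll_cons_sublist _ _ _))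

theorem of_eraseAll_consL₂ (d : Cl (C :: (B :: Γ).eraseAll X) Δ) : Cl (C :: B :: Γ.eraseAll X) Δ :=
  d.weakenL_sublist (.cons_cons C (List.eraseAll_cons_sublist _ _ _))

theorem negR_inversion (d : Cl Γ Δ) (A : Fm) : Cl (A :: Γ) (Δ.eraseAll (.neg A)) := by
  induction d generalizing A with
  | ax B =>
    by_cases h : B = .neg A
    · subst h
      rw [List.eraseAll_cons_of_eq rfl, List.eraseAll_nil]
      exact (Cl.negL (.ax A)).swapL
    · rw [List.eraseAll_cons_of_ne h, List.eraseAll_nil]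
      exact ax_of_mem (A := B) (by simp) (by simp)
  | perm hΓ hΔ _ ih => exact .perm (hΓ.cons A) (hΔ.eraseAll _) (ih A)
  | contrL _ ih => exact (ih A).rotL.contrL.swapL
  | @contrR Γ Δ B _ ih =>
    have ih := ih A
    by_cases h : B = .neg A
    · simpa only [List.eraseAll_cons_of_eq h] using ih
    · simp only [List.eraseAll_cons_of_ne h] at ih ⊢
      exact ih.contrR
  | weakL _ ih => exact (ih A).weakL.swapL
  | @weakR Γ Δ B _ ih =>
    by_cases h : B = .neg A
    · rw [List.eraseAll_cons_of_eq h]; exact ih A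
    · rw [List.eraseAll_cons_of_ne h]; exact (ih A).weakR
  | topR => rw [List.eraseAll_cons_of_ne (by simp)]; exact .topR
  | botL => exact Cl.botL.swapL
  | negL _ ih => exact (Cl.negL (ih A).of_eraseAll_consR).swapL
  | @negR Γ Δ B _ ih =>
    by_cases h : B = A
    · subst h
      rw [List.eraseAll_cons_of_eq rfl]
      exact (ih B).contrL
    · rw [List.eraseAll_cons_of_ne (by simpa using h)]
      exact .negR (ih A).swapL
  | andL _ ih => exact (Cl.andL (ih A).rotL).swapL
  | andR _ _ ih₁ ih₂ =>
    rw [List.eraseAll_cons_of_ne (by simp)]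
    exact .andR (ih₁ A).of_eraseAll_consR (ih₂ A).of_eraseAll_consR
  | orL _ _ ih₁ ih₂ => exact (Cl.orL (ih₁ A).swapL (ih₂ A).swapL).swapL
  | orR1 _ ih => rw [List.eraseAll_cons_of_ne (by simp)]; exact .orR1 (ih A).of_eraseAll_consR
  | orR2 _ ih => rw [List.eraseAll_cons_of_ne (by simp)]; exact .orR2 (ih A).of_eraseAll_consR
  | impL _ _ ih₁ ih₂ => exact (Cl.impL (ih₁ A).of_eraseAll_consR (ih₂ A).swapL).swapL
  | impR _ ih =>
    rw [List.eraseAll_cons_of_ne (by simp)]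
    exact .impR (ih A).of_eraseAll_consR.swapL
  | allL t _ ih => exact (Cl.allL t (ih A).swapL).swapL
  | @allR Γ Δ B _ ih =>
    rw [List.eraseAll_cons_of_ne (by simp)]
    have ih := (ih A.shift).of_eraseAll_consR
    rw [Fm.eraseAll_map_shift_neg] at ih
    exact .allR ih
  | exL _ ih =>
    have ih := (ih A.shift).swapL
    rw [Fm.eraseAll_map_shift_neg] at ih
    exact (Cl.exL ih).swapL
  | exR t _ ih =>
    rw [List.eraseAll_cons_of_ne (by simp)]
    exact .exR t (ih A).of_eraseAll_consR

theorem negL_inversion (d : Cl Γ Δ) (A : Fm) : Cl (Γ.eraseAll (.neg A)) (A :: Δ) := by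
  induction d generalizing A with
  | ax B =>
    by_cases h : B = .neg A
    · subst h
      rw [List.eraseAll_cons_of_eq rfl, List.eraseAll_nil]
      exact (Cl.negR (.ax A)).swapR
    · rw [List.eraseAll_cons_of_ne h, List.eraseAll_nil]
      exact ax_of_mem (A := B) (by simp) (by simp)
  | perm hΓ hΔ _ ih => exact .perm (hΓ.eraseAll _) (hΔ.cons A) (ih A)
  | @contrL Γ Δ B _ ih =>
    have ih := ih A
    by_cases h : B = .neg A
    · simpa only [List.eraseAll_cons_of_eq h] using ih
    · simp only [List.eraseAll_cons_of_ne h] at ih ⊢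
      exact ih.contrL
  | contrR _ ih => exact (ih A).rotR.contrR.swapR
  | @weakL Γ Δ B _ ih =>
    by_cases h : B = .neg A
    · rw [List.eraseAll_cons_of_eq h]; exact ih A
    · rw [List.eraseAll_cons_of_ne h]; exact (ih A).weakL
  | weakR _ ih => exact (ih A).weakR.swapR
  | topR => exact Cl.topR.swapR
  | botL => rw [List.eraseAll_cons_of_ne (by simp)]; exact .botL
  | @negL Γ Δ B _ ih =>
    by_cases h : B = A
    · subst h
      rw [List.eraseAll_cons_of_eq rfl]
      exact (ih B).contrR
    · rw [List.eraseAll_cons_of_ne (by simpa using h)]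
      exact .negL (ih A).swapR
  | negR _ ih => exact (Cl.negR (ih A).of_eraseAll_consL).swapR
  | andL _ ih =>
    rw [List.eraseAll_cons_of_ne (by simp)]
    exact .andL (ih A).of_eraseAll_consL.of_eraseAll_consL₂
  | andR _ _ ih₁ ih₂ => exact (Cl.andR (ih₁ A).swapR (ih₂ A).swapR).swapR
  | orL _ _ ih₁ ih₂ =>
    rw [List.eraseAll_cons_of_ne (by simp)]
    exact .orL (ih₁ A).of_eraseAll_consL (ih₂ A).of_eraseAll_consL
  | orR1 _ ih => exact (Cl.orR1 (ih A).swapR).swapR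
  | orR2 _ ih => exact (Cl.orR2 (ih A).swapR).swapR
  | impL _ _ ih₁ ih₂ =>
    rw [List.eraseAll_cons_of_ne (by simp)]
    exact .impL (ih₁ A).swapR (ih₂ A).of_eraseAll_consL
  | impR _ ih => exact (Cl.impR (ih A).of_eraseAll_consL.swapR).swapR
  | allL t _ ih =>
    rw [List.eraseAll_cons_of_ne (by simp)]
    exact .allL t (ih A).of_eraseAll_consL
  | allR _ ih =>
    have ih := (ih A.shift).swapR
    rw [Fm.eraseAll_map_shift_neg] at ih
    exact (Cl.allR ih).swapR
  | exL _ ih =>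
    rw [List.eraseAll_cons_of_ne (by simp)]
    have ih := (ih A.shift).of_eraseAll_consL
    rw [Fm.eraseAll_map_shift_neg] at ih
    exact .exL ih
  | exR t _ ih => exact (Cl.exR t (ih A).swapR).swapR

theorem of_negR (d : Cl Γ [.neg B]) : Cl (B :: Γ) [] := by
  simpa [List.eraseAll_cons_of_eq] using d.negR_inversion B

theorem of_negL (d : Cl (.neg C :: Γ) []) : Cl Γ [C] := by
  have h := d.negL_inversion C
  rw [List.eraseAll_cons_of_eq rfl] at h
  exact h.weakenL_sublist (List.eraseAll_sublist _ _)

theorem impR_inversion (d : Cl Γ Δ) (A B : Fm) : Cl (A :: Γ) (B :: Δ.eraseAll (.imp A B)) := by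
  induction d generalizing A B with
  | ax C =>
    by_cases h : C = .imp A B
    · subst h
      rw [List.eraseAll_cons_of_eq rfl, List.eraseAll_nil]
      exact (Cl.impL (Cl.ax A).weakR.swapR (Cl.ax B).weakL.swapL).swapL
    · rw [List.eraseAll_cons_of_ne h, List.eraseAll_nil]
      exact ax_of_mem (A := C) (by simp) (by simp)
  | perm hΓ hΔ _ ih => exact .perm (hΓ.cons A) ((hΔ.eraseAll _).cons B) (ih A B)
  | contrL _ ih => exact (ih A B).rotL.contrL.swapL
  | @contrR Γ Δ C _ ih =>
    have ih := ih A B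
    by_cases h : C = .imp A B
    · simpa only [List.eraseAll_cons_of_eq h] using ih
    · simp only [List.eraseAll_cons_of_ne h] at ih ⊢
      exact ih.rotR.contrR.swapR
  | weakL _ ih => exact (ih A B).weakL.swapL
  | @weakR Γ Δ C _ ih =>
    by_cases h : C = .imp A B
    · rw [List.eraseAll_cons_of_eq h]; exact ih A B
    · rw [List.eraseAll_cons_of_ne h]; exact (ih A B).weakR.swapR
  | topR => rw [List.eraseAll_cons_of_ne (by simp)]; exact Cl.topR.swapR
  | botL => exact Cl.botL.swapL
  | negL _ ih => exact (Cl.negL (ih A B).of_eraseAll_consR₂.swapR).swapL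
  | negR _ ih =>
    rw [List.eraseAll_cons_of_ne (by simp)]
    exact (Cl.negR (ih A B).swapL).swapR
  | andL _ ih => exact (Cl.andL (ih A B).rotL).swapL
  | andR _ _ ih₁ ih₂ =>
    rw [List.eraseAll_cons_of_ne (by simp)]
    exact (Cl.andR (ih₁ A B).of_eraseAll_consR₂.swapR (ih₂ A B).of_eraseAll_consR₂.swapR).swapR
  | orL _ _ ih₁ ih₂ => exact (Cl.orL (ih₁ A B).swapL (ih₂ A B).swapL).swapL
  | orR1 _ ih =>
    rw [List.eraseAll_cons_of_ne (by simp)]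
    exact (Cl.orR1 (ih A B).of_eraseAll_consR₂.swapR).swapR
  | orR2 _ ih =>
    rw [List.eraseAll_cons_of_ne (by simp)]
    exact (Cl.orR2 (ih A B).of_eraseAll_consR₂.swapR).swapR
  | impL _ _ ih₁ ih₂ => exact (Cl.impL (ih₁ A B).of_eraseAll_consR₂.swapR (ih₂ A B).swapL).swapL
  | @impR Γ Δ C D _ ih =>
    by_cases h : Fm.imp C D = .imp A B
    · obtain ⟨rfl, rfl⟩ := Fm.imp.inj h
      rw [List.eraseAll_cons_of_eq rfl]
      have ih := ih C D
      rw [List.eraseAll_cons_of_ne (Fm.ne_imp_right C D)] at ih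
      exact ih.contrL.contrR
    · rw [List.eraseAll_cons_of_ne h]
      exact (Cl.impR (ih A B).of_eraseAll_consR₂.swapL.swapR).swapR
  | allL t _ ih => exact (Cl.allL t (ih A B).swapL).swapL
  | allR _ ih =>
    rw [List.eraseAll_cons_of_ne (by simp)]
    have ih := (ih A.shift B.shift).of_eraseAll_consR₂
    rw [Fm.eraseAll_map_shift_imp] at ih
    exact Cl.swapR (.allR ih.swapR)
  | exL _ ih =>
    have ih := (ih A.shift B.shift).swapL
    rw [Fm.eraseAll_map_shift_imp] at ih
    exact (Cl.exL ih).swapL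
  | exR t _ ih =>
    rw [List.eraseAll_cons_of_ne (by simp)]
    exact (Cl.exR t (ih A B).of_eraseAll_consR₂.swapR).swapR

end Cl

/-! ### From constructive proofs of decorated sequents to classical proofs -/

/-- `Decorates A B`: `A` is `B` with double negations inserted at arbitrary positions. -/
inductive Decorates : Fm → Fm → Prop
  | atom (p : Nat) (l : List Tm) : Decorates (.atom p l) (.atom p l)
  | top : Decorates .top .top
  | bot : Decorates .bot .bot
  | neg {A B} : Decorates A B → Decorates (.neg A) (.neg B)
  | and {A₁ A₂ B₁ B₂} : Decorates A₁ B₁ → Decorates A₂ B₂ → Decorates (.and A₁ A₂) (.and B₁ B₂)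
  | or {A₁ A₂ B₁ B₂} : Decorates A₁ B₁ → Decorates A₂ B₂ → Decorates (.or A₁ A₂) (.or B₁ B₂)
  | imp {A₁ A₂ B₁ B₂} : Decorates A₁ B₁ → Decorates A₂ B₂ → Decorates (.imp A₁ A₂) (.imp B₁ B₂)
  | all {A B} : Decorates A B → Decorates (.all A) (.all B)
  | ex {A B} : Decorates A B → Decorates (.ex A) (.ex B)
  | dn {A B} : Decorates A B → Decorates (.neg (.neg A)) B

namespace Decorates

variable {A B C : Fm}

theorem rename (h : Decorates A B) (f : Nat → Nat) : Decorates (A.rename f) (B.rename f) := by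
  induction h generalizing f with
  | atom => exact .atom _ _
  | top => exact .top
  | bot => exact .bot
  | neg _ ih => exact .neg (ih f)
  | and _ _ ih₁ ih₂ => exact .and (ih₁ f) (ih₂ f)
  | or _ _ ih₁ ih₂ => exact .or (ih₁ f) (ih₂ f)
  | imp _ _ ih₁ ih₂ => exact .imp (ih₁ f) (ih₂ f)
  | all _ ih => exact .all (ih _)
  | ex _ ih => exact .ex (ih _)
  | dn _ ih => exact .dn (ih f)

theorem subst (h : Decorates A B) (σ : Nat → Tm) : Decorates (A.subst σ) (B.subst σ) := by
  induction h generalizing σ with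
  | atom => exact .atom _ _
  | top => exact .top
  | bot => exact .bot
  | neg _ ih => exact .neg (ih σ)
  | and _ _ ih₁ ih₂ => exact .and (ih₁ σ) (ih₂ σ)
  | or _ _ ih₁ ih₂ => exact .or (ih₁ σ) (ih₂ σ)
  | imp _ _ ih₁ ih₂ => exact .imp (ih₁ σ) (ih₂ σ)
  | all _ ih => exact .all (ih _)
  | ex _ ih => exact .ex (ih _)
  | dn _ ih => exact .dn (ih σ)

theorem bar (A : Fm) : Decorates A.bar A := by
  induction A with
  | atom p l => exact .atom p l
  | top => exact .dn .top
  | bot => exact .dn .bot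
  | neg _ ih => exact .dn (.dn (.neg ih))
  | and _ _ ih₁ ih₂ => exact .dn (.and (.dn ih₁) (.dn ih₂))
  | or _ _ ih₁ ih₂ => exact .dn (.or (.dn ih₁) (.dn ih₂))
  | imp _ _ ih₁ ih₂ => exact .dn (.imp (.dn ih₁) (.dn ih₂))
  | all _ ih => exact .dn (.all (.dn ih))
  | ex _ ih => exact .dn (.ex (.dn ih))

theorem foldr_impc_bar (Γ : List Fm) (A : Fm) :
    Decorates (Γ.foldr (fun H acc => Fm.impc H.bar acc) A.bar) (Γ.foldr .imp A) := by
  induction Γ with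
  | nil => exact bar A
  | cons H Γ ih => exact .dn (.imp (.dn (bar H)) (.dn ih))

theorem of_neg_neg (h : Decorates (.neg (.neg A)) C) :
    Decorates A C ∨ ∃ C', C = .neg (.neg C') ∧ Decorates A C' := by
  rcases h with _ | _ | _ | h | _ | _ | _ | _ | _ | h
  · rcases h with _ | _ | _ | h | _ | _ | _ | _ | _ | h
    exacts [.inr ⟨_, rfl, h⟩, .inl (.neg h)]
  · exact .inl h

theorem forall₂_shift {Γ Γ' : List Fm} (h : List.Forall₂ Decorates Γ Γ') :
    List.Forall₂ Decorates (Γ.map Fm.shift) (Γ'.map Fm.shift) :=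
  List.forall₂_map_left_iff.2 (List.forall₂_map_right_iff.2 (h.imp fun _ _ h => h.rename _))

end Decorates

theorem Cl.of_decorates : ∀ {A B C : Fm}, Decorates A B → Decorates A C → Cl [B] [C]
  | _, _, _, .dn hB, hC => by
    rcases hC.of_neg_neg with hC' | ⟨C', rfl, hC'⟩
    exacts [of_decorates hB hC', (of_decorates hB hC').dnR]
  | _, _, _, hB, .dn hC => by
    rcases hB.of_neg_neg with hB' | ⟨B', rfl, hB'⟩
    exacts [of_decorates hB' hC, (of_decorates hB' hC).dnL]
  | _, _, _, .atom _ _, .atom _ _ => .ax _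
  | _, _, _, .top, .top => .ax _
  | _, _, _, .bot, .bot => .ax _
  | _, _, _, .neg hB, .neg hC => negL_negR (of_decorates hC hB)
  | _, _, _, .and hB₁ hB₂, .and hC₁ hC₂ =>
    .andL (.andR (of_decorates hB₁ hC₁).weakL.swapL (of_decorates hB₂ hC₂).weakL)
  | _, _, _, .or hB₁ hB₂, .or hC₁ hC₂ =>
    .orL (.orR1 (of_decorates hB₁ hC₁)) (.orR2 (of_decorates hB₂ hC₂))
  | _, _, _, .imp hB₁ hB₂, .imp hC₁ hC₂ =>
    .impR (Cl.impL (of_decorates hC₁ hB₁).weakR.swapR (of_decorates hB₂ hC₂).weakL.swapL).swapL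
  | _, _, _, .all hB, .all hC => all_mono (of_decorates hB hC)
  | _, _, _, .ex hB, .ex hC => ex_mono (of_decorates hB hC)
termination_by A => sizeOf A

theorem Intu.toCl_of_decorates {Γ' : List Fm} {Δ' : Option Fm} (d : Intu Γ' Δ') :
    ∀ {Γ : List Fm} {Δ : Option Fm}, List.Forall₂ Decorates Γ' Γ → Option.Rel Decorates Δ' Δ →
      Cl Γ Δ.toList := by
  induction d with
  | ax A =>
    rintro _ _ (_ | ⟨hB, ⟨⟩⟩) (⟨hC⟩ | _)
    exact Cl.of_decorates hB hC
  | perm hp _ ih =>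
    intro Γ Δ hΓ hΔ
    obtain ⟨Γ₀, hΓ₀, hperm⟩ := List.perm_comp_forall₂ hp hΓ
    exact (ih hΓ₀ hΔ).permL hperm
  | contrL _ ih => rintro _ _ (_ | ⟨hB, hΓ⟩) hΔ; exact .contrL (ih (.cons hB (.cons hB hΓ)) hΔ)
  | weakL _ ih => rintro _ _ (_ | ⟨_, hΓ⟩) hΔ; exact .weakL (ih hΓ hΔ)
  | weakR _ ih => rintro _ _ hΓ (⟨_⟩ | _); exact .weakR (ih hΓ .none)
  | topR => rintro _ _ _ (⟨⟨⟩⟩ | _); exact .topR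
  | botL => rintro _ _ (_ | ⟨⟨⟩, _⟩) _; exact .botL
  | negL _ ih =>
    rintro _ _ (_ | ⟨hB, hΓ⟩) (_ | _)
    cases hB with
    | neg hB => exact .negL (ih hΓ (.some hB))
    | dn hB => exact (ih hΓ (.some (.neg hB))).of_negR
  | negR _ ih =>
    rintro _ _ hΓ (⟨hC⟩ | _)
    cases hC with
    | neg hC => exact .negR (ih (.cons hC hΓ) .none)
    | dn hC => exact (ih (.cons (.neg hC) hΓ) .none).of_negL
  | andL _ ih =>
    rintro _ _ (_ | ⟨hB, hΓ⟩) hΔ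
    cases hB with | and hB₁ hB₂ => exact .andL (ih (.cons hB₁ (.cons hB₂ hΓ)) hΔ)
  | andR _ _ ih₁ ih₂ =>
    rintro _ _ hΓ (⟨hC⟩ | _)
    cases hC with | and hC₁ hC₂ => exact .andR (ih₁ hΓ (.some hC₁)) (ih₂ hΓ (.some hC₂))
  | orL _ _ ih₁ ih₂ =>
    rintro _ _ (_ | ⟨hB, hΓ⟩) hΔ
    cases hB with | or hB₁ hB₂ => exact .orL (ih₁ (.cons hB₁ hΓ) hΔ) (ih₂ (.cons hB₂ hΓ) hΔ)
  | orR1 _ ih =>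
    rintro _ _ hΓ (⟨hC⟩ | _)
    cases hC with | or hC₁ _ => exact .orR1 (ih hΓ (.some hC₁))
  | orR2 _ ih =>
    rintro _ _ hΓ (⟨hC⟩ | _)
    cases hC with | or _ hC₂ => exact .orR2 (ih hΓ (.some hC₂))
  | impL _ _ ih₁ ih₂ =>
    rintro _ _ (_ | ⟨hB, hΓ⟩) hΔ
    cases hB with
    | imp hB₁ hB₂ =>
      exact .impL ((ih₁ hΓ (.some hB₁)).weakenR_sublist (by simp)) (ih₂ (.cons hB₂ hΓ) hΔ)
  | impR _ ih =>
    rintro _ _ hΓ (⟨hC⟩ | _)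
    cases hC with | imp hC₁ hC₂ => exact .impR (ih (.cons hC₁ hΓ) (.some hC₂))
  | allL t _ ih =>
    rintro _ _ (_ | ⟨hB, hΓ⟩) hΔ
    cases hB with | all hB => exact .allL t (ih (.cons (hB.subst _) hΓ) hΔ)
  | allR _ ih =>
    rintro _ _ hΓ (⟨hC⟩ | _)
    cases hC with | all hC => exact .allR (ih (Decorates.forall₂_shift hΓ) (.some hC))
  | exL _ ih =>
    rintro _ _ (_ | ⟨hB, hΓ⟩) hΔ
    cases hB with
    | ex hB =>
      refine .exL ?_
      rw [← Option.toList_map]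
      refine ih (.cons hB (Decorates.forall₂_shift hΓ)) ?_
      cases hΔ with
      | none => exact .none
      | some h => exact .some (h.rename _)
  | exR t _ ih =>
    rintro _ _ hΓ (⟨hC⟩ | _)
    cases hC with | ex hC => exact .exR t (ih hΓ (.some (hC.subst _)))

theorem Cl.of_foldr_imp (A : Fm) :
    ∀ (Γ : List Fm) {Ctx : List Fm}, Cl Ctx [Γ.foldr .imp A] → Cl (Γ ++ Ctx) [A]
  | [], _, d => d
  | H :: Γ, _, d => by
    have h := d.impR_inversion H (Γ.foldr .imp A)
    rw [List.foldr_cons, List.eraseAll_cons_of_eq rfl, List.eraseAll_nil] at h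
    exact (of_foldr_imp A Γ h).permL List.perm_middle

theorem Cl.of_intu_foldr_impc_bar {Γ : List Fm} {A : Fm}
    (h : Intu [] (some (Γ.foldr (fun H acc => Fm.impc H.bar acc) A.bar))) : Cl Γ [A] := by
  simpa using of_foldr_imp A Γ (h.toCl_of_decorates .nil (.some (.foldr_impc_bar Γ A)))

/-! ### From classical proofs to constructive proofs of translated sequents -/

namespace Intu

variable {Γ Γ' : List Fm} {Δ : Option Fm} {A B : Fm}

theorem permL (h : Γ.Perm Γ') (d : Intu Γ Δ) : Intu Γ' Δ := .perm h d

theorem swapL (d : Intu (A :: B :: Γ) Δ) : Intu (B :: A :: Γ) Δ := d.permL (.swap B A Γ)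

theorem toMiddle (Ξ : List Fm) (d : Intu (A :: (Ξ ++ Γ)) Δ) : Intu (Ξ ++ A :: Γ) Δ :=
  d.permL List.perm_middle.symm

theorem ofMiddle (Ξ : List Fm) (d : Intu (Ξ ++ A :: Γ) Δ) : Intu (A :: (Ξ ++ Γ)) Δ :=
  d.permL List.perm_middle

theorem dnL (d : Intu (A :: Γ) none) : Intu (A.dn :: Γ) none := .negL (.negR d)

end Intu

theorem Fm.bar_rename (A : Fm) (f : Nat → Nat) : (A.rename f).bar = A.bar.rename f := by
  induction A generalizing f <;> simp_all [Fm.rename, Fm.bar, Fm.dn]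

theorem Fm.bar_subst (A : Fm) (σ : Nat → Tm) : (A.subst σ).bar = A.bar.subst σ := by
  induction A generalizing σ <;> simp_all [Fm.subst, Fm.bar, Fm.dn]

theorem Fm.light_rename (A : Fm) (f : Nat → Nat) : (A.rename f).light = A.light.rename f := by
  cases A <;> simp [Fm.rename, Fm.light, Fm.dn, Fm.bar_rename]

theorem Fm.bar_eq_dn_light {A : Fm} (h : ¬A.isAtom) : A.bar = A.light.dn := by
  cases A <;> simp_all [Fm.isAtom, Fm.bar, Fm.light, Fm.dn]

theorem Fm.dn_bar_inst (A : Fm) (t : Tm) : A.bar.dn.inst t = (A.inst t).bar.dn := by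
  simp only [Fm.inst, Fm.dn, Fm.subst, Fm.bar_subst]

/-- `¬|A|`, the translation of a conclusion `A` moved to the left. -/
def Fm.negLight (A : Fm) : Fm := .neg A.light

theorem Fm.map_bar_shift (Γ : List Fm) :
    (Γ.map Fm.shift).map Fm.bar = (Γ.map Fm.bar).map Fm.shift := by
  simp [Function.comp_def, Fm.shift, Fm.bar_rename]

theorem Fm.map_negLight_shift (Γ : List Fm) :
    (Γ.map Fm.shift).map Fm.negLight = (Γ.map Fm.negLight).map Fm.shift := by
  simp [Function.comp_def, Fm.shift, Fm.negLight, Fm.rename, Fm.light_rename]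

namespace Intu

variable {Γ Δ Θ : List Fm} {A : Fm}

theorem negBar_of_negLight (d : Intu (A.negLight :: Θ) none) : Intu (.neg A.bar :: Θ) none := by
  by_cases h : A.isAtom
  · cases A <;> simp_all [Fm.isAtom, Fm.bar, Fm.light, Fm.negLight]
  · rw [Fm.bar_eq_dn_light h]; exact d.dnL

theorem bar_negLight (A : Fm) : Intu [A.bar, A.negLight] none := by
  by_cases h : A.isAtom
  · cases A <;> simp_all [Fm.isAtom, Fm.bar, Fm.light, Fm.negLight]
    exact (Intu.negL (.ax _)).swapL
  · rw [Fm.bar_eq_dn_light h]; exact .negL (.ax _)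

theorem negLight_of_light (d : Intu (Γ ++ Δ) (some A.light)) : Intu (Γ ++ A.negLight :: Δ) none :=
  toMiddle _ (.negL d)

theorem dnBar_of_negLight (d : Intu (Γ ++ A.negLight :: Δ) none) : Intu (Γ ++ Δ) (some A.bar.dn) :=
  .negR (negBar_of_negLight (ofMiddle _ d))

end Intu

theorem Cl.toIntu {Γ Δ : List Fm} (d : Cl Γ Δ) : Intu (Γ.map Fm.bar ++ Δ.map Fm.negLight) none := by
  induction d with
  | ax A => exact Intu.bar_negLight A
  | perm hΓ hΔ _ ih => exact ih.permL ((hΓ.map _).append (hΔ.map _))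
  | contrL _ ih => exact .contrL ih
  | contrR _ ih =>
    exact .toMiddle _ (.contrL ((Intu.ofMiddle _ ih).permL (List.perm_middle.cons _)))
  | weakL _ ih => exact .weakL ih
  | weakR _ ih => exact .toMiddle _ (.weakL ih)
  | topR => exact .toMiddle _ (.negL .topR)
  | botL => exact Intu.botL.dnL
  | negL _ ih => exact (Intu.negBar_of_negLight (.ofMiddle _ ih)).dnL.dnL
  | negR _ ih => exact .toMiddle _ ih.dnL.dnL
  | andL _ ih => exact (Intu.andL (ih.dnL.swapL.dnL.swapL)).dnL
  | andR _ _ ih₁ ih₂ =>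
    exact .negLight_of_light (.andR (.dnBar_of_negLight ih₁) (.dnBar_of_negLight ih₂))
  | orL _ _ ih₁ ih₂ => exact (Intu.orL ih₁.dnL ih₂.dnL).dnL
  | orR1 _ ih => exact .negLight_of_light (.orR1 (.dnBar_of_negLight ih))
  | orR2 _ ih => exact .negLight_of_light (.orR2 (.dnBar_of_negLight ih))
  | impL _ _ ih₁ ih₂ => exact (Intu.impL (.dnBar_of_negLight ih₁) ih₂.dnL).dnL
  | @impR Γ Δ A B _ ih =>
    refine .negLight_of_light (.impR (.negR ?_))
    exact (Intu.negBar_of_negLight (Intu.ofMiddle (A.bar :: Γ.map Fm.bar) ih)).swapL.dnL.swapL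
  | allL t _ ih => exact (Intu.allL t (by rw [Fm.dn_bar_inst]; exact ih.dnL)).dnL
  | @allR Γ Δ A _ ih =>
    refine .negLight_of_light (.allR (.negR (.negBar_of_negLight ?_)))
    rw [List.map_append, ← Fm.map_bar_shift, ← Fm.map_negLight_shift]
    exact .ofMiddle _ ih
  | @exL Γ Δ A _ ih =>
    refine (Intu.exL ?_).dnL
    show Intu (A.bar.dn :: (Γ.map Fm.bar ++ Δ.map Fm.negLight).map Fm.shift) none
    rw [List.map_append, ← Fm.map_bar_shift, ← Fm.map_negLight_shift]
    exact ih.dnL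
  | exR t _ ih =>
    refine .negLight_of_light (.exR t ?_)
    rw [Fm.dn_bar_inst]
    exact .dnBar_of_negLight ih

theorem Cl.exists_mem_mem_of_isAtom {Γ Δ : List Fm} (d : Cl Γ Δ) :
    (∀ B ∈ Γ, B.isAtom) → (∀ B ∈ Δ, B.isAtom) → ∃ B ∈ Γ, B ∈ Δ := by
  induction d with
  | ax A => intros; exact ⟨A, by simp, by simp⟩
  | perm hΓ hΔ _ ih =>
    intro h₁ h₂
    obtain ⟨B, hB₁, hB₂⟩ := ih (fun B hB => h₁ B (hΓ.subset hB)) (fun B hB => h₂ B (hΔ.subset hB))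
    exact ⟨B, hΓ.subset hB₁, hΔ.subset hB₂⟩
  | contrL _ ih => intro h₁ h₂; simpa using ih (by simpa using h₁) h₂
  | contrR _ ih => intro h₁ h₂; simpa using ih h₁ (by simpa using h₂)
  | weakL _ ih =>
    intro h₁ h₂
    obtain ⟨B, hB₁, hB₂⟩ := ih (fun B hB => h₁ B (.tail _ hB)) h₂
    exact ⟨B, .tail _ hB₁, hB₂⟩
  | weakR _ ih =>
    intro h₁ h₂
    obtain ⟨B, hB₁, hB₂⟩ := ih h₁ (fun B hB => h₂ B (.tail _ hB))
    exact ⟨B, hB₁, .tail _ hB₂⟩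
  | _ => simp [Fm.isAtom] -- the remaining rules introduce a compound formula

theorem Cl.not_nil_atom (p : Nat) (l : List Tm) : ¬ Cl [] [.atom p l] := fun d => by
  simpa using d.exists_mem_mem_of_isAtom (by simp) (by simp [Fm.isAtom])

theorem Intu.neg_imp_dn_dn {Θ : List Fm} {B C : Fm} (d : Intu (.neg C :: B :: Θ) none) :
    Intu (.neg (.imp B.dn C.dn) :: Θ) none :=
  .negL (.impR (.negR d.swapL.dnL.swapL))

theorem Intu.neg_foldr_impc_bar (A : Fm) : ∀ (Γ Θ : List Fm),
    Intu (Γ.map Fm.bar ++ A.negLight :: Θ) none →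
    Intu (.neg (Γ.foldr (fun H acc => Fm.impc H.bar acc) A.bar) :: Θ) none
  | [], _, d => .negBar_of_negLight d
  | H :: Γ, Θ, d =>
    let d' := d.permL List.cons_append_cons_perm_append_cons_cons
    (neg_imp_dn_dn (neg_foldr_impc_bar A Γ (H.bar :: Θ) d')).dnL

theorem Intu.foldr_impc_bar_of_cl {Γ : List Fm} {A : Fm} (d : Cl Γ [A]) :
    Intu [] (some (Γ.foldr (fun H acc => Fm.impc H.bar acc) A.bar)) := by
  cases Γ with
  | nil =>
    by_cases hA : A.isAtom
    · cases A <;> simp only [Fm.isAtom] at hA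
      exact absurd d (Cl.not_nil_atom _ _)
    · rw [List.foldr_nil, Fm.bar_eq_dn_light hA]
      exact .negR d.toIntu
  | cons H Γ =>
    have hk := d.toIntu.permL List.cons_append_cons_perm_append_cons_cons
    exact .negR (neg_imp_dn_dn (neg_foldr_impc_bar A Γ [H.bar] hk))

theorem stmt5 (Γ : List Fm) (A : Fm) :
    Cl Γ [A] ↔
      Intu [] (some (Γ.foldr (fun H acc => Fm.impc H.bar acc) A.bar)) :=
  ⟨Intu.foldr_impc_bar_of_cl, Cl.of_intu_foldr_impc_bar⟩
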